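/- Let C ∈ ℝ^{m×m} be symmetric positive semidefinite, and let T_C ∈ ℝ^{2m×2m} be the block matrix [[I, −√C],[√C, I−C]]. Then T_Cᵀ · diag(I−C, I) · T_C = diag(I, I−C). Consequently, for all X, Y ∈ ℝ^{2m×d}, ‖T_C·X − T_C·Y‖²_{diag(I−C,I)} = ‖X − Y‖²_{diag(I,I−C)}. -/

import Mathlib

noncomputable section

open Matrix Finset

/-- `ℝ^d` as a Euclidean (inner-product) space. -/
abbrev Vec (d : ℕ) := EuclideanSpace ℝ (Fin d)

/-- Interpret a plain tuple as a Euclidean vector. -/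
def toVec {d : ℕ} (x : Fin d → ℝ) : Vec d := (WithLp.equiv 2 (Fin d → ℝ)).symm x

/-- Interpret a Euclidean vector as a plain tuple. -/
def ofVec {d : ℕ} (x : Vec d) : Fin d → ℝ := (WithLp.equiv 2 (Fin d → ℝ)) x

/-- The matrix `1 · xᵀ` whose rows all equal `x`. -/
def oneOuter (m : ℕ) {d : ℕ} (x : Vec d) : Matrix (Fin m) (Fin d) ℝ :=
  Matrix.of fun _ j => ofVec x j

/-- `f(X) = ∑ i, f_i(x_i)`, where `x_i` is the `i`-th row of `X`. -/
def fMat {m d : ℕ} (f : Fin m → Vec d → ℝ) (X : Matrix (Fin m) (Fin d) ℝ) : ℝ :=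
  ∑ i, f i (toVec (X i))

/-- `g(X) = ∑ i, G(x_i)`. -/
def gMat {m d : ℕ} (G : Vec d → ℝ) (X : Matrix (Fin m) (Fin d) ℝ) : ℝ :=
  ∑ i, G (toVec (X i))

/-- `∇f(X)`: the matrix whose `i`-th row is `∇f_i(x_i)`. -/
def gradMat {m d : ℕ} (gf : Fin m → Vec d → Vec d) (X : Matrix (Fin m) (Fin d) ℝ) :
    Matrix (Fin m) (Fin d) ℝ :=
  Matrix.of fun i => ofVec (gf i (toVec (X i)))

/-- `F(x) = (1/m) ∑ i, f_i(x)`. -/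
def Fbar {m d : ℕ} (f : Fin m → Vec d → ℝ) (x : Vec d) : ℝ :=
  (1 / (m : ℝ)) * ∑ i, f i x

/-- `gf` is the gradient field of `f`. -/
def IsGradient {d : ℕ} (f : Vec d → ℝ) (gf : Vec d → Vec d) : Prop :=
  ∀ x, HasGradientAt f (gf x) x

/-- `L`-smoothness: the gradient field is `L`-Lipschitz. -/
def LSmooth {d : ℕ} (L : ℝ) (gf : Vec d → Vec d) : Prop :=
  ∀ x y, ‖gf x - gf y‖ ≤ L * ‖x - y‖

/-- `ξ` is a subgradient of `G` at `x`. -/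
def IsSubgradientAt {d : ℕ} (G : Vec d → ℝ) (ξ x : Vec d) : Prop :=
  ∀ y, G x + (inner ℝ ξ (y - x) : ℝ) ≤ G y

/-- `p` is the proximal point `prox_{γ G}(z)`, i.e. a minimizer of
`y ↦ G(y) + ‖y − z‖²/(2γ)`. -/
def IsProx {d : ℕ} (G : Vec d → ℝ) (γ : ℝ) (z p : Vec d) : Prop :=
  ∀ y, G p + ‖p - z‖ ^ 2 / (2 * γ) ≤ G y + ‖y - z‖ ^ 2 / (2 * γ)

/-- Apply a map `P : ℝ^d → ℝ^d` rowwise to a matrix (used for `prox_{γ g}`). -/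
def rowsMap {m d : ℕ} (P : Vec d → Vec d) (Z : Matrix (Fin m) (Fin d) ℝ) :
    Matrix (Fin m) (Fin d) ℝ :=
  Matrix.of fun i => ofVec (P (toVec (Z i)))

/-- Frobenius inner product `⟨X, Y⟩ = trace(Xᵀ Y)`. -/
def frInner {n p : Type*} [Fintype n] [Fintype p] (X Y : Matrix n p ℝ) : ℝ :=
  Matrix.trace (Xᵀ * Y)

/-- Squared Frobenius norm. -/
def froSq {n p : Type*} [Fintype n] [Fintype p] (X : Matrix n p ℝ) : ℝ := frInner X X

/-- Frobenius norm. -/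
def fro {n p : Type*} [Fintype n] [Fintype p] (X : Matrix n p ℝ) : ℝ := Real.sqrt (froSq X)

/-- Weighted squared norm `‖X‖²_M = trace(Xᵀ M X)`. -/
def mnormSq {n p : Type*} [Fintype n] [Fintype p] (M : Matrix n n ℝ) (X : Matrix n p ℝ) : ℝ :=
  frInner X (M * X)

/-- Weighted inner product `⟨X, Y⟩_M = trace(Xᵀ M Y)`. -/
def minnerM {n p : Type*} [Fintype n] [Fintype p] (M : Matrix n n ℝ) (X Y : Matrix n p ℝ) : ℝ :=
  frInner X (M * Y)

/-- The set of eigenvalues of a matrix. -/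
def eigs {m : ℕ} (M : Matrix (Fin m) (Fin m) ℝ) : Set ℝ :=
  {r | ∃ v : Fin m → ℝ, v ≠ 0 ∧ M *ᵥ v = r • v}

/-- Largest eigenvalue. -/
def lmax {m : ℕ} (M : Matrix (Fin m) (Fin m) ℝ) : ℝ := sSup (eigs M)

/-- Smallest eigenvalue. -/
def lmin {m : ℕ} (M : Matrix (Fin m) (Fin m) ℝ) : ℝ := sInf (eigs M)

/-- Second smallest eigenvalue of a symmetric matrix whose null space is `span{1}`:
the smallest eigenvalue attained on the orthogonal complement of `1`. -/
def lam2 {m : ℕ} (M : Matrix (Fin m) (Fin m) ℝ) : ℝ :=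
  sInf {r | ∃ v : Fin m → ℝ, v ≠ 0 ∧ (∑ i, v i) = 0 ∧ M *ᵥ v = r • v}

/-- Spectral radius. -/
def specRad {m : ℕ} (M : Matrix (Fin m) (Fin m) ℝ) : ℝ := sSup ((fun r => |r|) '' eigs M)

/-- The null space of `C` is exactly `span{1}`. -/
def NullSpanOnes {m : ℕ} (C : Matrix (Fin m) (Fin m) ℝ) : Prop :=
  ∀ v : Fin m → ℝ, C *ᵥ v = 0 ↔ ∃ c : ℝ, v = fun _ => c

/-- The averaging matrix `J = 1·1ᵀ/m`. -/
def Jmat (m : ℕ) : Matrix (Fin m) (Fin m) ℝ := Matrix.of fun _ _ => 1 / (m : ℝ)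

/-- The positive semidefinite square root of a positive semidefinite matrix (the definition
`Matrix.PosSemidef.sqrt` of the older Mathlib, which has since been removed). -/
def Matrix.PosSemidef.sqrt {n : Type*} [Fintype n] [DecidableEq n]
    {A : Matrix n n ℝ} (hA : A.PosSemidef) : Matrix n n ℝ :=
  (hA.1.eigenvectorUnitary : Matrix n n ℝ) * diagonal ((√·) ∘ hA.1.eigenvalues) *
    (star hA.1.eigenvectorUnitary : Matrix n n ℝ)

theorem Matrix.PosSemidef.sqrt_mul_self {n : Type*} [Fintype n] [DecidableEq n]
    {A : Matrix n n ℝ} (hA : A.PosSemidef) : hA.sqrt * hA.sqrt = A := by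
  have hU : (star hA.1.eigenvectorUnitary : Matrix n n ℝ) * (hA.1.eigenvectorUnitary : Matrix n n ℝ)
      = 1 := Unitary.coe_star_mul_self _
  have hD : diagonal ((√·) ∘ hA.1.eigenvalues) * diagonal ((√·) ∘ hA.1.eigenvalues)
      = diagonal hA.1.eigenvalues := by
    rw [diagonal_mul_diagonal]
    congr 1
    funext i
    simp only [Function.comp_apply]
    exact Real.mul_self_sqrt (hA.eigenvalues_nonneg i)
  have hspec := hA.1.spectral_theorem
  rw [Unitary.conjStarAlgAut_apply] at hspec
  unfold Matrix.PosSemidef.sqrt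
  calc _ = (hA.1.eigenvectorUnitary : Matrix n n ℝ) * (diagonal ((√·) ∘ hA.1.eigenvalues) *
        ((star hA.1.eigenvectorUnitary : Matrix n n ℝ) * (hA.1.eigenvectorUnitary : Matrix n n ℝ)) *
        diagonal ((√·) ∘ hA.1.eigenvalues)) * (star hA.1.eigenvectorUnitary : Matrix n n ℝ) := by
          simp only [Matrix.mul_assoc]
    _ = A := by
          rw [hU, Matrix.mul_one, hD]
          conv_rhs => rw [hspec]
          rfl

theorem Matrix.PosSemidef.sqrt_transpose {n : Type*} [Fintype n] [DecidableEq n]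
    {A : Matrix n n ℝ} (hA : A.PosSemidef) : hA.sqrtᵀ = hA.sqrt := by
  unfold Matrix.PosSemidef.sqrt
  rw [Matrix.transpose_mul, Matrix.transpose_mul, diagonal_transpose, Matrix.mul_assoc]
  simp [Matrix.star_eq_conjTranspose, Matrix.conjTranspose_eq_transpose_of_trivial,
    Matrix.mul_assoc]

/-- Lemma 3: the communication operator `T_C` satisfies
`T_Cᵀ · diag(I−C, I) · T_C = diag(I, I−C)`, and consequently it is an isometry between the
weighted norms `‖·‖_{diag(I−C,I)}` and `‖·‖_{diag(I,I−C)}`. -/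
theorem statement_4
    (m d : ℕ) (C : Matrix (Fin m) (Fin m) ℝ) (hC : C.PosSemidef) :
    (Matrix.fromBlocks 1 (-hC.sqrt) hC.sqrt (1 - C))ᵀ *
        Matrix.fromBlocks (1 - C) 0 0 1 *
        Matrix.fromBlocks 1 (-hC.sqrt) hC.sqrt (1 - C) =
      Matrix.fromBlocks 1 0 0 (1 - C) ∧
    ∀ X Y : Matrix (Fin m ⊕ Fin m) (Fin d) ℝ,
      mnormSq (Matrix.fromBlocks (1 - C) 0 0 1)
          (Matrix.fromBlocks 1 (-hC.sqrt) hC.sqrt (1 - C) * X -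
            Matrix.fromBlocks 1 (-hC.sqrt) hC.sqrt (1 - C) * Y) =
        mnormSq (Matrix.fromBlocks 1 0 0 (1 - C)) (X - Y) := by
  set S := hC.sqrt with hSdef
  have hSS : S * S = C := hC.sqrt_mul_self
  have hSsymm : Sᵀ = S := hC.sqrt_transpose
  have hCsymm : Cᵀ = C := hC.isHermitian
  have hcomm : S * C = C * S := by rw [← hSS, mul_assoc]
  have e11 : (1 - C) + S * S = (1 : Matrix (Fin m) (Fin m) ℝ) := by
    rw [hSS, sub_add_cancel]
  have e12 : (1 - C) * (-S) + S * (1 - C) = (0 : Matrix (Fin m) (Fin m) ℝ) := by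
    rw [mul_neg, sub_mul, one_mul, mul_sub, mul_one, hcomm]; abel
  have e21 : (-S) * (1 - C) + (1 - C) * S = (0 : Matrix (Fin m) (Fin m) ℝ) := by
    rw [neg_mul, mul_sub, mul_one, sub_mul, one_mul, hcomm]; abel
  have hSCS : S * (1 - C) * S = C - C * C := by
    rw [mul_sub, mul_one, sub_mul, hSS, hcomm, mul_assoc, hSS]
  have e22 : (-S) * (1 - C) * (-S) + (1 - C) * (1 - C) = 1 - C := by
    rw [neg_mul, neg_mul_neg, hSCS, mul_sub, mul_one, sub_mul, one_mul]
    abel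
  have hmain :
      (Matrix.fromBlocks 1 (-S) S (1 - C))ᵀ *
          Matrix.fromBlocks (1 - C) 0 0 1 *
          Matrix.fromBlocks 1 (-S) S (1 - C) =
        Matrix.fromBlocks 1 0 0 (1 - C) := by
    rw [Matrix.fromBlocks_transpose, Matrix.fromBlocks_multiply, Matrix.fromBlocks_multiply]
    simp only [Matrix.transpose_neg, hSsymm, Matrix.transpose_one, Matrix.transpose_sub, hCsymm,
      Matrix.mul_zero, Matrix.zero_mul, add_zero, zero_add, Matrix.mul_one, Matrix.one_mul]
    rw [e11, e12, e21, e22]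
  refine ⟨hmain, ?_⟩
  intro X Y
  rw [← Matrix.mul_sub]
  unfold mnormSq frInner
  rw [Matrix.transpose_mul, ← hmain]
  congr 1
  simp only [Matrix.mul_assoc]
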